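/- Let n, n' and m be nonnegative integers such that n+m and n'+m are both odd and n ≥ n'. Then the partisan chocolate game position PC(n,m) is less than or equal to PC(n',m) in the normal-play game order. -/

import Mathlib

/-!
The positions of partisan chocolate are totally ordered: `PC n m ≤ PC p q` iff
`chocoKey (n, m) ≤ chocoKey (p, q)`, where the key lives in `ω + ω*`. Positions with `n + m` even
come first, increasing with `n / 2 + m / 2`; positions with `n + m` odd come after them, decreasing
with `n / 2 + m / 2`. This follows by induction on the total size: Left options are even positions
of smaller key, Right options odd positions of larger key, and the options closest to a position
leave no gap in which the key of a position compared with it could hide. For `n + m` and `n' + m`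
odd, `n' ≤ n` places `PC n m` lower in the decreasing part.
-/

universe u

namespace SetTheory

/-- Pre-games (combinatorial games before quotienting), as in the older Mathlib
`SetTheory.PGame`, which has since been removed from Mathlib. -/
inductive PGame : Type (u + 1)
  | mk : ∀ α β : Type u, (α → PGame) → (β → PGame) → PGame

namespace PGame

/-- Simultaneous definition of `x ≤ y` (first component) and `x ⧏ y` (second component),
as in the older Mathlib. -/
noncomputable def leLF (x : PGame.{u}) : PGame.{u} → Prop × Prop :=
  PGame.rec (motive := fun _ => PGame.{u} → Prop × Prop)
    (fun xl xr xL xR ihL ihR y =>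
      PGame.rec (motive := fun _ => Prop × Prop)
        (fun yl yr yL yR jhL jhR =>
          ((∀ i, (ihL i (mk yl yr yL yR)).2) ∧ ∀ j, (jhR j).2,
           (∃ i, (jhL i).1) ∨ ∃ j, (ihR j (mk yl yr yL yR)).1))
        y)
    x

instance : LE PGame.{u} :=
  ⟨fun x y => (leLF x y).1⟩

end PGame

end SetTheory

open SetTheory

/-- The partisan chocolate game position `PC n m`.
Left options: `PC n' m` with `n' < n` and `n' + m` even, and `PC n m'` with `m' < m` and
`n + m'` even. Right options: the same with "odd" in place of "even". -/
def PC : ℕ → ℕ → SetTheory.PGame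
  | n, m =>
    SetTheory.PGame.mk
      {p : ℕ × ℕ // (p.2 = m ∧ p.1 < n ∧ Even (p.1 + m)) ∨ (p.1 = n ∧ p.2 < m ∧ Even (n + p.2))}
      {p : ℕ × ℕ // (p.2 = m ∧ p.1 < n ∧ Odd (p.1 + m)) ∨ (p.1 = n ∧ p.2 < m ∧ Odd (n + p.2))}
      (fun p => PC p.1.1 p.1.2)
      (fun p => PC p.1.1 p.1.2)
termination_by n m => n + m
decreasing_by
  all_goals rcases p.2 with ⟨h1, h2, -⟩ | ⟨h1, h2, -⟩ <;> omega

namespace SetTheory.PGame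

def LF (x y : PGame.{u}) : Prop := (leLF x y).2

theorem mk_le_mk {xl xr : Type u} {xL : xl → PGame.{u}} {xR : xr → PGame.{u}}
    {yl yr : Type u} {yL : yl → PGame.{u}} {yR : yr → PGame.{u}} :
    mk xl xr xL xR ≤ mk yl yr yL yR ↔
      (∀ i, LF (xL i) (mk yl yr yL yR)) ∧ ∀ j, LF (mk xl xr xL xR) (yR j) := Iff.rfl

theorem mk_lf_mk {xl xr : Type u} {xL : xl → PGame.{u}} {xR : xr → PGame.{u}}
    {yl yr : Type u} {yL : yl → PGame.{u}} {yR : yr → PGame.{u}} :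
    LF (mk xl xr xL xR) (mk yl yr yL yR) ↔
      (∃ i, mk xl xr xL xR ≤ yL i) ∨ ∃ j, xR j ≤ mk yl yr yL yR := Iff.rfl

theorem not_le_iff_lf_and_not_le_iff_lf (x y : PGame.{u}) :
    (¬ x ≤ y ↔ LF y x) ∧ (¬ y ≤ x ↔ LF x y) := by
  induction x generalizing y with
  | mk xl xr xL xR ihxL ihxR =>
    induction y with
    | mk yl yr yL yR ihyL ihyR =>
      have hxL : ∀ i, ¬ LF (xL i) (mk yl yr yL yR) ↔ mk yl yr yL yR ≤ xL i := fun i =>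
        by rw [← (ihxL i _).2, not_not]
      have hyR : ∀ j, ¬ LF (mk xl xr xL xR) (yR j) ↔ yR j ≤ mk xl xr xL xR := fun j =>
        by rw [← (ihyR j).2, not_not]
      have hyL : ∀ j, ¬ LF (yL j) (mk xl xr xL xR) ↔ mk xl xr xL xR ≤ yL j := fun j =>
        by rw [← (ihyL j).1, not_not]
      have hxR : ∀ i, ¬ LF (mk yl yr yL yR) (xR i) ↔ xR i ≤ mk yl yr yL yR := fun i =>
        by rw [← (ihxR i _).1, not_not]
      simp only [mk_le_mk, mk_lf_mk, not_and_or, not_forall, hxL, hyR, hyL, hxR, and_self]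

theorem not_le {x y : PGame.{u}} : ¬ x ≤ y ↔ LF y x :=
  (not_le_iff_lf_and_not_le_iff_lf x y).1

theorem le_iff_key_le {ι : Type u} {α : Type*} [LinearOrder α] (G : ι → PGame.{u})
    (L R : ι → ι → Prop)
    (hG : ∀ i, G i = mk {j // L i j} {j // R i j} (fun j => G j.1) (fun j => G j.1))
    (size : ι → ℕ) (hsizeL : ∀ i j, L i j → size j < size i)
    (hsizeR : ∀ i j, R i j → size j < size i) (key : ι → α)
    (hkeyL : ∀ i j, L i j → key j < key i) (hkeyR : ∀ i j, R i j → key i < key j)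
    (hgap : ∀ i j, key j < key i →
      (∃ i', L i i' ∧ key j ≤ key i') ∨ ∃ j', R j j' ∧ key j' ≤ key i)
    (i j : ι) : G i ≤ G j ↔ key i ≤ key j := by
  have le_iff : ∀ i j, G i ≤ G j ↔
      (∀ i' : {k // L i k}, LF (G i') (G j)) ∧ ∀ j' : {k // R j k}, LF (G i) (G j') := by
    intro i j
    rw [hG i, hG j, mk_le_mk, ← hG i, ← hG j]
  induction hN : size i + size j using Nat.strong_induction_on generalizing i j with
  | _ N ih =>
    subst hN
    rw [le_iff]
    constructor
    · rintro ⟨hl, hr⟩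
      by_contra! hlt
      rcases hgap i j hlt with ⟨i', hii', hji'⟩ | ⟨j', hjj', hj'i⟩
      · have hsize := hsizeL i i' hii'
        exact not_le.2 (hl ⟨i', hii'⟩) ((ih _ (by omega) j i' rfl).2 hji')
      · have hsize := hsizeR j j' hjj'
        exact not_le.2 (hr ⟨j', hjj'⟩) ((ih _ (by omega) j' i rfl).2 hj'i)
    · intro hij
      refine ⟨fun i' => not_le.1 ?_, fun j' => not_le.1 ?_⟩
      · have hsize := hsizeL i i' i'.2
        exact fun h => ((hkeyL i i' i'.2).trans_le hij).not_ge ((ih _ (by omega) j i' rfl).1 h)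
      · have hsize := hsizeR j j' j'.2
        exact fun h => (hij.trans_lt (hkeyR j j' j'.2)).not_ge ((ih _ (by omega) j' i rfl).1 h)

end SetTheory.PGame

open SetTheory PGame OrderDual

def ChocoMove (P : ℕ → Prop) (x y : ℕ × ℕ) : Prop :=
  (y.2 = x.2 ∧ y.1 < x.1 ∧ P (y.1 + x.2)) ∨ (y.1 = x.1 ∧ y.2 < x.2 ∧ P (x.1 + y.2))

theorem PC_eq_mk (x : ℕ × ℕ) :
    PC x.1 x.2 = mk {y // ChocoMove Even x y} {y // ChocoMove Odd x y}
      (fun y => PC y.1.1 y.1.2) (fun y => PC y.1.1 y.1.2) := by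
  rw [PC]
  rfl

section ChocoMove

variable {P : ℕ → Prop} {x y : ℕ × ℕ}

theorem ChocoMove.sum_lt (h : ChocoMove P x y) : y.1 + y.2 < x.1 + x.2 := by
  rcases h with ⟨h₁, h₂, -⟩ | ⟨h₁, h₂, -⟩ <;> omega

theorem ChocoMove.prop_sum (h : ChocoMove P x y) : P (y.1 + y.2) := by
  rcases h with ⟨h₁, -, h⟩ | ⟨h₁, -, h⟩ <;> rwa [h₁]

theorem ChocoMove.halfSum_lt (h : ChocoMove P x y) (hpar : (y.1 + y.2) % 2 = (x.1 + x.2) % 2) :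
    y.1 / 2 + y.2 / 2 < x.1 / 2 + x.2 / 2 := by
  rcases h with ⟨h₁, h₂, -⟩ | ⟨h₁, h₂, -⟩ <;> omega

theorem exists_chocoMove_sub_two (hx : 1 ≤ x.1 / 2 + x.2 / 2) (hP : P (x.1 + x.2 - 2)) :
    ∃ y, ChocoMove P x y ∧ y.1 / 2 + y.2 / 2 + 1 = x.1 / 2 + x.2 / 2 := by
  by_cases h : 2 ≤ x.1
  · exact ⟨(x.1 - 2, x.2), .inl ⟨rfl, by omega, by convert hP using 1; omega⟩, by omega⟩
  · exact ⟨(x.1, x.2 - 2), .inr ⟨rfl, by omega, by convert hP using 1; omega⟩, by omega⟩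

theorem exists_chocoMove_sub_one (hx : 1 ≤ x.1 / 2 + x.2 / 2) (hP : P (x.1 + x.2 - 1)) :
    ∃ y, ChocoMove P x y ∧ x.1 / 2 + x.2 / 2 ≤ y.1 / 2 + y.2 / 2 + 1 := by
  by_cases h : 1 ≤ x.1
  · exact ⟨(x.1 - 1, x.2), .inl ⟨rfl, by omega, by convert hP using 1; omega⟩, by omega⟩
  · exact ⟨(x.1, x.2 - 1), .inr ⟨rfl, by omega, by convert hP using 1; omega⟩, by omega⟩

theorem exists_chocoMove_of_odd (hx : Odd (x.1 + x.2)) (hP : P (x.1 + x.2 - 1)) :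
    ∃ y, ChocoMove P x y ∧ y.1 / 2 + y.2 / 2 = x.1 / 2 + x.2 / 2 := by
  rw [Nat.odd_iff] at hx
  by_cases h : x.1 % 2 = 1
  · exact ⟨(x.1 - 1, x.2), .inl ⟨rfl, by omega, by convert hP using 1; omega⟩, by omega⟩
  · exact ⟨(x.1, x.2 - 1), .inr ⟨rfl, by omega, by convert hP using 1; omega⟩, by omega⟩

end ChocoMove

def chocoKey (x : ℕ × ℕ) : ℕ ⊕ₗ ℕᵒᵈ :=
  if Even (x.1 + x.2) then toLex (.inl (x.1 / 2 + x.2 / 2))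
  else toLex (.inr (toDual (x.1 / 2 + x.2 / 2)))

section chocoKey

variable {x y : ℕ × ℕ}

theorem chocoKey_of_even (h : Even (x.1 + x.2)) :
    chocoKey x = toLex (.inl (x.1 / 2 + x.2 / 2)) :=
  if_pos h

theorem chocoKey_of_odd (h : Odd (x.1 + x.2)) :
    chocoKey x = toLex (.inr (toDual (x.1 / 2 + x.2 / 2))) :=
  if_neg (Nat.not_even_iff_odd.2 h)

theorem chocoKey_lt_of_chocoMove_even (h : ChocoMove Even x y) : chocoKey y < chocoKey x := by
  have hy := h.prop_sum
  rw [chocoKey_of_even hy]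
  rcases Nat.even_or_odd (x.1 + x.2) with hx | hx
  · rw [chocoKey_of_even hx, Sum.Lex.inl_lt_inl_iff]
    rw [Nat.even_iff] at hx hy
    exact h.halfSum_lt (by omega)
  · rw [chocoKey_of_odd hx]
    exact Sum.Lex.inl_lt_inr _ _

theorem chocoKey_lt_of_chocoMove_odd (h : ChocoMove Odd x y) : chocoKey x < chocoKey y := by
  have hy := h.prop_sum
  rw [chocoKey_of_odd hy]
  rcases Nat.even_or_odd (x.1 + x.2) with hx | hx
  · rw [chocoKey_of_even hx]
    exact Sum.Lex.inl_lt_inr _ _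
  · rw [chocoKey_of_odd hx, Sum.Lex.inr_lt_inr_iff, toDual_lt_toDual]
    rw [Nat.odd_iff] at hx hy
    exact h.halfSum_lt (by omega)

theorem chocoKey_gap (h : chocoKey y < chocoKey x) :
    (∃ x', ChocoMove Even x x' ∧ chocoKey y ≤ chocoKey x') ∨
      ∃ y', ChocoMove Odd y y' ∧ chocoKey y' ≤ chocoKey x := by
  rcases Nat.even_or_odd (x.1 + x.2) with hx | hx <;>
    rcases Nat.even_or_odd (y.1 + y.2) with hy | hy
  · rw [chocoKey_of_even hx, chocoKey_of_even hy, Sum.Lex.inl_lt_inl_iff] at h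
    obtain ⟨x', hxx', hs⟩ := exists_chocoMove_sub_two (P := Even) (x := x) (by omega)
      (by rw [Nat.even_iff] at hx ⊢; omega)
    refine .inl ⟨x', hxx', ?_⟩
    rw [chocoKey_of_even hy, chocoKey_of_even hxx'.prop_sum, Sum.Lex.inl_le_inl_iff]
    omega
  · rw [chocoKey_of_even hx, chocoKey_of_odd hy] at h
    exact absurd h Sum.Lex.not_inr_lt_inl
  · rw [chocoKey_of_odd hx, chocoKey_of_even hy] at h
    by_cases hs : y.1 / 2 + y.2 / 2 ≤ x.1 / 2 + x.2 / 2
    · obtain ⟨x', hxx', hs'⟩ := exists_chocoMove_of_odd (P := Even) hx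
        (by rw [Nat.odd_iff] at hx; rw [Nat.even_iff]; omega)
      refine .inl ⟨x', hxx', ?_⟩
      rw [chocoKey_of_even hy, chocoKey_of_even hxx'.prop_sum, Sum.Lex.inl_le_inl_iff]
      omega
    · obtain ⟨y', hyy', hs'⟩ := exists_chocoMove_sub_one (P := Odd) (x := y) (by omega)
        (by rw [Nat.even_iff] at hy; rw [Nat.odd_iff]; omega)
      refine .inr ⟨y', hyy', ?_⟩
      rw [chocoKey_of_odd hx, chocoKey_of_odd hyy'.prop_sum, Sum.Lex.inr_le_inr_iff,
        toDual_le_toDual]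
      omega
  · rw [chocoKey_of_odd hx, chocoKey_of_odd hy, Sum.Lex.inr_lt_inr_iff, toDual_lt_toDual] at h
    obtain ⟨y', hyy', hs⟩ := exists_chocoMove_sub_two (P := Odd) (x := y) (by omega)
      (by rw [Nat.odd_iff] at hy ⊢; omega)
    refine .inr ⟨y', hyy', ?_⟩
    rw [chocoKey_of_odd hx, chocoKey_of_odd hyy'.prop_sum, Sum.Lex.inr_le_inr_iff,
      toDual_le_toDual]
    omega

end chocoKey

theorem PC_le_PC_iff (x y : ℕ × ℕ) : PC x.1 x.2 ≤ PC y.1 y.2 ↔ chocoKey x ≤ chocoKey y :=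
  le_iff_key_le (fun x => PC x.1 x.2) (ChocoMove Even) (ChocoMove Odd) PC_eq_mk
    (fun x => x.1 + x.2) (fun _ _ h => h.sum_lt) (fun _ _ h => h.sum_lt) chocoKey
    (fun _ _ => chocoKey_lt_of_chocoMove_even) (fun _ _ => chocoKey_lt_of_chocoMove_odd)
    (fun _ _ => chocoKey_gap) x y

theorem stmt_3 (n n' m : ℕ) (hn : Odd (n + m)) (hn' : Odd (n' + m)) (h : n' ≤ n) :
    PC n m ≤ PC n' m := by
  rw [PC_le_PC_iff (n, m) (n', m), chocoKey_of_odd hn, chocoKey_of_odd hn',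
    Sum.Lex.inr_le_inr_iff, toDual_le_toDual]
  omega
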